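/- For 0 ≤ n ≤ m and parameters a, c, the terminating q-hypergeometric sum satisfies ∑_{j=0}^{n} ((q^{-n};q)_j (a;q)_j / ((c;q)_j (q;q)_j)) q^j = a^n (c/a;q)_n / (c;q)_n (the q-Chu–Vandermonde identity ₂φ₁(q^{-n}, a; c; q, q) = a^n (c/a)_n/(c)_n). -/

import Mathlib

/-!
Write `φₙ(a, c)` for the left-hand side. Comparing `(q⁻ⁿ⁻¹; q)ⱼ` with `(q⁻ⁿ; q)ⱼ` termwise gives
the contiguous relation `φₙ₊₁(a, c) = φₙ(a, c) - q⁻ⁿ (1 - a) / (1 - c) · φₙ(a q, c q)`, and the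
right-hand side satisfies the same recursion, so the identity follows by induction on `n`
with `a` and `c` generalized.
-/

noncomputable def qPoch (z q : ℝ) (m : ℕ) : ℝ := ∏ j ∈ Finset.range m, (1 - z * q ^ j)

open Finset

lemma qPoch_zero (z q : ℝ) : qPoch z q 0 = 1 := prod_range_zero _

lemma qPoch_succ (z q : ℝ) (m : ℕ) : qPoch z q (m + 1) = qPoch z q m * (1 - z * q ^ m) :=
  prod_range_succ _ _

lemma qPoch_succ' (z q : ℝ) (m : ℕ) : qPoch z q (m + 1) = (1 - z) * qPoch (z * q) q m := by
  simp only [qPoch, prod_range_succ', pow_succ', pow_zero, mul_one, mul_assoc]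
  exact mul_comm _ _

lemma qPoch_ne_zero_of_le {z q : ℝ} {m n : ℕ} (h : qPoch z q n ≠ 0) (hmn : m ≤ n) :
    qPoch z q m ≠ 0 :=
  left_ne_zero_of_mul (by rwa [qPoch, ← prod_range_mul_prod_Ico _ hmn] at h)

lemma qPoch_self_ne_zero {q : ℝ} (hq0 : 0 < q) (hq1 : q < 1) (n : ℕ) : qPoch q q n ≠ 0 := by
  refine (prod_pos fun i _ => ?_).ne'
  have := pow_lt_one₀ hq0.le hq1 i.succ_ne_zero
  rw [pow_succ'] at this
  linarith

lemma qPoch_zpow_neg_succ_self {q : ℝ} (hq : q ≠ 0) (n : ℕ) :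
    qPoch (q ^ (-(n : ℤ))) q (n + 1) = 0 := by
  rw [qPoch_succ, zpow_neg, zpow_natCast, inv_mul_cancel₀ (pow_ne_zero n hq), sub_self, mul_zero]

lemma qPoch_succ_sub_qPoch_div {q : ℝ} (hq : q ≠ 0) (z : ℝ) (k : ℕ) :
    qPoch z q (k + 1) - qPoch (z / q) q (k + 1) = z / q * (1 - q ^ (k + 1)) * qPoch z q k := by
  rw [qPoch_succ, qPoch_succ', div_mul_cancel₀ z hq]
  field_simp
  ring

noncomputable def qHypergeomTerm (z a c q : ℝ) (j : ℕ) : ℝ :=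
  qPoch z q j * qPoch a q j / (qPoch c q j * qPoch q q j) * q ^ j

lemma qHypergeomTerm_zero (z a c q : ℝ) : qHypergeomTerm z a c q 0 = 1 := by
  simp [qHypergeomTerm, qPoch_zero]

lemma qHypergeomTerm_succ_sub_div {z a c q : ℝ} {k : ℕ} (hq : q ≠ 0)
    (hc : qPoch c q (k + 1) ≠ 0) (hqq : qPoch q q (k + 1) ≠ 0) :
    qHypergeomTerm z a c q (k + 1) - qHypergeomTerm (z / q) a c q (k + 1)
      = z * (1 - a) / (1 - c) * qHypergeomTerm z (a * q) (c * q) q k := by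
  rw [qPoch_succ'] at hc
  rw [qPoch_succ] at hqq
  obtain ⟨h1c, hcq⟩ := mul_ne_zero_iff.mp hc
  obtain ⟨h1q, hqk⟩ := mul_ne_zero_iff.mp hqq
  simp only [qHypergeomTerm]
  rw [← sub_mul, ← sub_div, ← sub_mul, qPoch_succ_sub_qPoch_div hq z k, qPoch_succ' a,
    qPoch_succ' c, qPoch_succ q q k, pow_succ' q k]
  field_simp

noncomputable def qChuSum (q a c : ℝ) (n : ℕ) : ℝ :=
  ∑ j ∈ range (n + 1), qHypergeomTerm (q ^ (-(n : ℤ))) a c q j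

lemma qChuSum_succ {q a c : ℝ} {n : ℕ} (hq : q ≠ 0) (hc : qPoch c q (n + 1) ≠ 0)
    (hqq : qPoch q q (n + 1) ≠ 0) :
    qChuSum q a c (n + 1)
      = qChuSum q a c n - q ^ (-(n : ℤ)) * (1 - a) / (1 - c) * qChuSum q (a * q) (c * q) n := by
  set z := q ^ (-(n : ℤ))
  have hz : q ^ (-((n + 1 : ℕ) : ℤ)) = z / q := by
    rw [Nat.cast_succ, neg_add, zpow_add₀ hq, zpow_neg_one, div_eq_mul_inv]
  have hterm : ∀ k ∈ range (n + 1), qHypergeomTerm (z / q) a c q (k + 1) =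
      qHypergeomTerm z a c q (k + 1) -
        z * (1 - a) / (1 - c) * qHypergeomTerm z (a * q) (c * q) q k := fun k hk => by
    linarith [qHypergeomTerm_succ_sub_div (z := z) (a := a) hq
      (qPoch_ne_zero_of_le hc (mem_range.mp hk)) (qPoch_ne_zero_of_le hqq (mem_range.mp hk))]
  have htop : qHypergeomTerm z a c q (n + 1) = 0 := by
    rw [qHypergeomTerm, qPoch_zpow_neg_succ_self hq, zero_mul, zero_div, zero_mul]
  have hlower : qChuSum q a c n = 1 + ∑ k ∈ range (n + 1), qHypergeomTerm z a c q (k + 1) := by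
    rw [qChuSum, ← add_zero (∑ j ∈ _, _), ← htop, ← sum_range_succ, sum_range_succ',
      qHypergeomTerm_zero, add_comm]
  rw [qChuSum, sum_range_succ', hz, qHypergeomTerm_zero, sum_congr rfl hterm, sum_sub_distrib,
    ← mul_sum, hlower, qChuSum]
  ring

theorem qChuSum_eq {q : ℝ} (hq : q ≠ 0) {n : ℕ} (hqq : qPoch q q n ≠ 0) {a c : ℝ} (ha : a ≠ 0)
    (hc : qPoch c q n ≠ 0) : qChuSum q a c n = a ^ n * qPoch (c / a) q n / qPoch c q n := by
  induction n generalizing a c with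
  | zero => simp [qChuSum, qHypergeomTerm_zero, qPoch_zero]
  | succ n ih =>
    obtain ⟨h1c, hcq⟩ := mul_ne_zero_iff.mp (qPoch_succ' c q n ▸ hc)
    obtain ⟨hcn, h1cq⟩ := mul_ne_zero_iff.mp (qPoch_succ c q n ▸ hc)
    have hqn := qPoch_ne_zero_of_le hqq n.le_succ
    have hcq_eq : qPoch (c * q) q n = qPoch c q n * (1 - c * q ^ n) / (1 - c) := by
      rw [eq_div_iff h1c, ← qPoch_succ, qPoch_succ', mul_comm]
    rw [qChuSum_succ hq hc hqq, ih hqn ha hcn, ih hqn (mul_ne_zero ha hq) hcq,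
      mul_div_mul_right c a hq, hcq_eq, qPoch_succ (c / a), qPoch_succ c, zpow_neg, zpow_natCast]
    field_simp
    ring

theorem q_chu_vandermonde (q a c : ℝ) (n : ℕ) (hq0 : 0 < q) (hq1 : q < 1)
    (ha : a ≠ 0) (hc : qPoch c q n ≠ 0) :
    ∑ j ∈ Finset.range (n + 1),
        (qPoch (q ^ (-(n : ℤ))) q j * qPoch a q j / (qPoch c q j * qPoch q q j)) * q ^ j
      = a ^ n * qPoch (c / a) q n / qPoch c q n := by
  exact qChuSum_eq hq0.ne' (qPoch_self_ne_zero hq0 hq1 n) ha hc
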